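/- arXiv:1004.4880 — 7 statements merged into one kernel-verified Lean document; each statement's English description precedes it below -/
import Mathlib

section
/- Let H be an N×m real matrix of full rank N with N ≤ m, and let s, s' be arbitrary vectors in R^m. Define E(s) = (y - Hs)^T (HH^T)^{-1} (y - Hs), Q(s|s') = ‖s' + H^T(HH^T)^{-1}(y - Hs') - s‖², and Hfun(s|s') = (s - s')^T (I_m - H^T(HH^T)^{-1}H)(s - s'). Then E(s) = Q(s|s') - Hfun(s|s') for all s, s' in R^m and all y in R^N. -/
open Matrix

private lemma adj_dot {k l : ℕ} (M : Matrix (Fin k) (Fin l) ℝ) (x : Fin l → ℝ)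
    (y : Fin k → ℝ) : (M *ᵥ x) ⬝ᵥ y = x ⬝ᵥ (Mᵀ *ᵥ y) := by
  rw [dotProduct_comm, dotProduct_mulVec, ← mulVec_transpose, dotProduct_comm, dotProduct_comm x]

theorem ecme_identity {N m : ℕ} (H : Matrix (Fin N) (Fin m) ℝ)
    (hNm : N ≤ m) (hrank : H.rank = N)
    (y : Fin N → ℝ) (s s' : Fin m → ℝ) :
    (y - H *ᵥ s) ⬝ᵥ ((H * Hᵀ)⁻¹ *ᵥ (y - H *ᵥ s))
      = ((s' + Hᵀ *ᵥ ((H * Hᵀ)⁻¹ *ᵥ (y - H *ᵥ s')) - s) ⬝ᵥ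
         (s' + Hᵀ *ᵥ ((H * Hᵀ)⁻¹ *ᵥ (y - H *ᵥ s')) - s))
        - ((s - s') ⬝ᵥ ((1 - Hᵀ * (H * Hᵀ)⁻¹ * H) *ᵥ (s - s'))) := by
  classical
  set B : Matrix (Fin N) (Fin N) ℝ := H * Hᵀ with hBdef
  -- B is invertible
  have hrankB : B.rank = Fintype.card (Fin N) := by
    rw [hBdef, rank_self_mul_transpose, hrank, Fintype.card_fin]
  have hunit : IsUnit B := by
    rw [← mulVec_surjective_iff_isUnit]
    have h1 : LinearMap.range B.mulVecLin = ⊤ := by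
      apply Submodule.eq_top_of_finrank_eq
      rw [← Matrix.rank, hrankB]
      simp [Module.finrank_pi]
    intro v
    obtain ⟨w, hw⟩ := h1 ▸ Submodule.mem_top (x := v) (R := ℝ)
    exact ⟨w, hw⟩
  set A : Matrix (Fin N) (Fin N) ℝ := B⁻¹ with hAdef
  have hAB : A * B = 1 := nonsing_inv_mul B (isUnit_iff_isUnit_det B |>.mp hunit)
  have hBsym : Bᵀ = B := by rw [hBdef, transpose_mul, transpose_transpose]
  have hAsym : Aᵀ = A := by rw [hAdef, transpose_nonsing_inv, hBsym]
  set d : Fin m → ℝ := s - s' with hd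
  set r : Fin N → ℝ := y - H *ᵥ s' with hr
  have hys : y - H *ᵥ s = r - H *ᵥ d := by
    rw [hr, hd, mulVec_sub]; abel
  have hQs : s' + Hᵀ *ᵥ (A *ᵥ r) - s = Hᵀ *ᵥ (A *ᵥ r) - d := by
    rw [hd]; abel
  rw [hys, hQs]
  set u : Fin N → ℝ := A *ᵥ r with hu
  have key1 : (Hᵀ *ᵥ u) ⬝ᵥ (Hᵀ *ᵥ u) = r ⬝ᵥ u := by
    rw [adj_dot, transpose_transpose, mulVec_mulVec, ← hBdef, hu, adj_dot, hAsym,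
      mulVec_mulVec, mulVec_mulVec, hAB, Matrix.one_mul]
  have key2 : ∀ v : Fin m → ℝ, (Hᵀ *ᵥ u) ⬝ᵥ v = u ⬝ᵥ (H *ᵥ v) := by
    intro v
    rw [adj_dot, transpose_transpose]
  have key3 : ∀ v : Fin m → ℝ, r ⬝ᵥ (A *ᵥ (H *ᵥ v)) = u ⬝ᵥ (H *ᵥ v) := by
    intro v
    rw [hu, adj_dot, hAsym]
  have key4 : (H *ᵥ d) ⬝ᵥ (A *ᵥ (H *ᵥ d)) = d ⬝ᵥ ((Hᵀ * A * H) *ᵥ d) := by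
    rw [adj_dot, mulVec_mulVec, mulVec_mulVec, Matrix.mul_assoc]
  have key5 : (H *ᵥ d) ⬝ᵥ (A *ᵥ r) = u ⬝ᵥ (H *ᵥ d) := by
    rw [dotProduct_comm, ← hu]
  simp only [sub_dotProduct, dotProduct_sub, mulVec_sub, sub_mulVec, one_mulVec]
  rw [key1, key2 d, key3 d, key4, key5, dotProduct_comm d (Hᵀ *ᵥ u), key2 d]
  ring
end

section
/- Let H be an N×m real matrix with full row rank satisfying the unique representation property (spark(H) = N+1). If A ⊆ {1,…,m} is an index set with 0 < |A| ≤ m - N, then the largest eigenvalue of H_A^T (HH^T)^{-1} H_A is strictly less than 1. -/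
/-!
With `G = H Hᵀ`, the matrix `P = Hᵀ G⁻¹ H` is the orthogonal projection onto the row space of `H`,
and `H_Aᵀ G⁻¹ H_A` is its principal submatrix on `A`. So for `x ≠ 0` supported on `A`,
`xᵀ P x = ‖x‖² - ‖x - P x‖²`, and it remains to see `x ≠ P x`. If `x = Hᵀ w`, then `wᵀ H`
vanishes on the at least `N` columns outside `A`; by the unique representation property any `N`
of them span `ℝᴺ`, so `w = 0` and `x = 0`. The same argument shows that `G` is invertible.
-/

open Matrix

section

variable {K n ι : Type*} [Field K] [Fintype n] [DecidableEq n]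

theorem Matrix.eq_zero_of_vecMul_apply_eq_zero {H : Matrix n ι K} {S : Finset ι}
    (hS : LinearIndependent K fun j : S => fun i => H i j) (hcard : S.card = Fintype.card n)
    {w : n → K} (hw : ∀ j ∈ S, (w ᵥ* H) j = 0) : w = 0 := by
  have hspan : Submodule.span K (Set.range fun j : S => fun i => H i j) = ⊤ :=
    hS.span_eq_top_of_card_eq_finrank' (by simpa using hcard)
  have hdot : dotProductBilin K K w = 0 := by
    refine LinearMap.ext_on_range hspan fun j => ?_
    simpa [dotProductBilin, vecMul, dotProduct_comm] using hw j j.2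
  ext i
  simpa using LinearMap.congr_fun hdot (Pi.single i 1)

theorem Matrix.eq_zero_of_vecMul_apply_eq_zero_of_card_le {H : Matrix n ι K}
    (hURP : ∀ S : Finset ι, S.card = Fintype.card n →
      LinearIndependent K fun j : S => fun i => H i j)
    {S : Finset ι} (hS : Fintype.card n ≤ S.card) {w : n → K}
    (hw : ∀ j ∈ S, (w ᵥ* H) j = 0) : w = 0 := by
  obtain ⟨T, hTS, hT⟩ := Finset.exists_subset_card_eq hS
  exact eq_zero_of_vecMul_apply_eq_zero (hURP T hT) hT fun j hj => hw j (hTS hj)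

end

section

variable {α β R : Type*} [Fintype α] [Fintype β] [CommSemiring R] {f : α → β}

theorem Function.Injective.dotProduct_extend (hf : f.Injective) (v : β → R) (x : α → R) :
    v ⬝ᵥ f.extend x 0 = (v ∘ f) ⬝ᵥ x := by
  refine (Fintype.sum_of_injective f hf _ _ (fun b hb => ?_) fun a => ?_).symm
  · rw [Function.extend_apply' _ _ _ (by simpa using hb), Pi.zero_apply, mul_zero]
  · rw [hf.extend_apply, Function.comp_apply]

theorem Function.Injective.dotProduct_extend_self (hf : f.Injective) (x : α → R) :
    f.extend x 0 ⬝ᵥ f.extend x 0 = x ⬝ᵥ x := by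
  rw [hf.dotProduct_extend, Function.extend_comp hf]

theorem Function.Injective.submatrix_mulVec (hf : f.Injective) (M : Matrix β β R) (x : α → R) :
    M.submatrix f f *ᵥ x = (M *ᵥ f.extend x 0) ∘ f := by
  ext a
  exact (hf.dotProduct_extend (M (f a)) x).symm

theorem Function.Injective.dotProduct_submatrix_mulVec (hf : f.Injective) (M : Matrix β β R)
    (x : α → R) :
    x ⬝ᵥ (M.submatrix f f *ᵥ x) = f.extend x 0 ⬝ᵥ (M *ᵥ f.extend x 0) := by
  rw [hf.submatrix_mulVec, dotProduct_comm, ← hf.dotProduct_extend, dotProduct_comm]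

end

section

variable {R n ι : Type*} [CommRing R] [Fintype n] [DecidableEq n] [Fintype ι]

theorem Matrix.dotProduct_sub_projection_self {H : Matrix n ι R} (hG : IsUnit (H * Hᵀ).det)
    (y : ι → R) :
    (y - (Hᵀ * (H * Hᵀ)⁻¹ * H) *ᵥ y) ⬝ᵥ (y - (Hᵀ * (H * Hᵀ)⁻¹ * H) *ᵥ y) =
      y ⬝ᵥ y - y ⬝ᵥ ((Hᵀ * (H * Hᵀ)⁻¹ * H) *ᵥ y) := by
  set P := Hᵀ * (H * Hᵀ)⁻¹ * H
  have hsymm : Pᵀ = P := by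
    simp only [P, transpose_mul, transpose_transpose, transpose_nonsing_inv, Matrix.mul_assoc]
  have hidem : P * P = P := by
    rw [show P * P = Hᵀ * ((H * Hᵀ)⁻¹ * (H * Hᵀ)) * (H * Hᵀ)⁻¹ * H by
      simp only [P, Matrix.mul_assoc], nonsing_inv_mul _ hG, Matrix.mul_one]
  have hPy : (P *ᵥ y) ⬝ᵥ (P *ᵥ y) = y ⬝ᵥ (P *ᵥ y) := by
    rw [dotProduct_mulVec, ← mulVec_transpose, hsymm, mulVec_mulVec, hidem, dotProduct_comm]
  rw [sub_dotProduct, dotProduct_sub, dotProduct_sub, hPy, dotProduct_comm (P *ᵥ y) y]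
  ring

end

section

variable {n ι : Type*} [Fintype n] [DecidableEq n] [Fintype ι] {H : Matrix n ι ℝ}

theorem Matrix.posDef_mul_transpose_self_of_card_le
    (hURP : ∀ S : Finset ι, S.card = Fintype.card n →
      LinearIndependent ℝ fun j : S => fun i => H i j)
    {S : Finset ι} (hS : Fintype.card n ≤ S.card) : (H * Hᵀ).PosDef := by
  have hinj : Function.Injective H.vecMul := fun w₁ w₂ (hw : w₁ ᵥ* H = w₂ ᵥ* H) =>
    sub_eq_zero.mp <| eq_zero_of_vecMul_apply_eq_zero_of_card_le hURP hS fun j _ => by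
      rw [sub_vecMul, hw, sub_self, Pi.zero_apply]
  simpa only [conjTranspose_eq_transpose_of_trivial] using PosDef.mul_conjTranspose_self H hinj

theorem Matrix.dotProduct_projection_mulVec_lt
    (hURP : ∀ S : Finset ι, S.card = Fintype.card n →
      LinearIndependent ℝ fun j : S => fun i => H i j)
    {S : Finset ι} (hS : Fintype.card n ≤ S.card) {y : ι → ℝ} (hyS : ∀ j ∈ S, y j = 0)
    (hy : y ≠ 0) : y ⬝ᵥ ((Hᵀ * (H * Hᵀ)⁻¹ * H) *ᵥ y) < y ⬝ᵥ y := by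
  have hG : IsUnit (H * Hᵀ).det := (posDef_mul_transpose_self_of_card_le hURP hS).det_pos.ne'.isUnit
  set w := (H * Hᵀ)⁻¹ *ᵥ H *ᵥ y
  have hPy : (Hᵀ * (H * Hᵀ)⁻¹ * H) *ᵥ y = w ᵥ* H := by
    rw [← mulVec_transpose, ← mulVec_mulVec, ← mulVec_mulVec]
  have hres : y - w ᵥ* H ≠ 0 := by
    intro hyw
    have hw : w = 0 := eq_zero_of_vecMul_apply_eq_zero_of_card_le hURP hS fun j hj => by
      rw [← sub_eq_zero.mp hyw, hyS j hj]
    exact hy (by rw [sub_eq_zero.mp hyw, hw, zero_vecMul])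
  have hpos : 0 < (y - w ᵥ* H) ⬝ᵥ (y - w ᵥ* H) := by
    simpa using dotProduct_star_self_pos_iff.mpr hres
  rw [← hPy, dotProduct_sub_projection_self hG] at hpos
  linarith

theorem Matrix.IsHermitian.eigenvalues_lt_of_dotProduct_mulVec_lt {M : Matrix n n ℝ}
    (hM : M.IsHermitian) {c : ℝ} (h : ∀ x ≠ 0, x ⬝ᵥ (M *ᵥ x) < c * (x ⬝ᵥ x)) (i : n) :
    hM.eigenvalues i < c := by
  set v : n → ℝ := ⇑(hM.eigenvectorBasis i)
  have hv : v ≠ 0 := fun hv =>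
    hM.eigenvectorBasis.orthonormal.ne_zero i (by ext j; exact congrFun hv j)
  have hvv : 0 < v ⬝ᵥ v := by simpa using dotProduct_star_self_pos_iff.mpr hv
  have hlt := h v hv
  rw [hM.mulVec_eigenvectorBasis, dotProduct_smul, smul_eq_mul] at hlt
  exact lt_of_mul_lt_mul_right hlt hvv.le

end

theorem max_eigenvalue_lt_one_of_URP_general {N m : ℕ} (H : Matrix (Fin N) (Fin m) ℝ)
    (hURP : ∀ A : Finset (Fin m), A.card = N →
      LinearIndependent ℝ (fun j : A => fun i => H i (j : Fin m)))
    (A : Finset (Fin m)) (hAmN : A.card ≤ m - N)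
    (h : ((H.submatrix id (fun j : A => (j : Fin m)))ᵀ * (H * Hᵀ)⁻¹ *
          H.submatrix id (fun j : A => (j : Fin m))).IsHermitian) :
    ∀ i : A, h.eigenvalues i < 1 := by
  intro i
  have hURP' : ∀ S : Finset (Fin m), S.card = Fintype.card (Fin N) →
      LinearIndependent ℝ fun j : S => fun i => H i j := by simpa using hURP
  have hAc : Fintype.card (Fin N) ≤ Aᶜ.card := by
    have hApos := Finset.card_pos.mpr ⟨_, i.2⟩
    have hAle := A.card_le_univ
    simp only [Fintype.card_fin, Finset.card_compl] at hAle ⊢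
    omega
  have hsub : (H.submatrix id (fun j : A => (j : Fin m)))ᵀ * (H * Hᵀ)⁻¹ *
      H.submatrix id (fun j : A => (j : Fin m)) =
      (Hᵀ * (H * Hᵀ)⁻¹ * H).submatrix Subtype.val Subtype.val := by
    rw [transpose_submatrix, submatrix_mul _ _ _ id _ Function.bijective_id,
      submatrix_mul _ _ _ id _ Function.bijective_id, submatrix_id_id]
  refine h.eigenvalues_lt_of_dotProduct_mulVec_lt (fun x hx => ?_) i
  have hf : Function.Injective (Subtype.val : A → Fin m) := Subtype.val_injective
  rw [hsub, hf.dotProduct_submatrix_mulVec, one_mul, ← hf.dotProduct_extend_self]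
  refine dotProduct_projection_mulVec_lt hURP' hAc (fun j hj => ?_) ?_
  · exact Function.extend_apply' _ _ _ (by simpa using Finset.mem_compl.mp hj)
  · exact fun h0 => hx (by rw [← Function.extend_comp hf x 0, h0]; rfl)

theorem max_eigenvalue_lt_one_of_URP {N m : ℕ} (H : Matrix (Fin N) (Fin m) ℝ)
    (hNm : N ≤ m) (hrank : H.rank = N)
    (hURP : ∀ A : Finset (Fin m), A.card = N →
      LinearIndependent ℝ (fun j : A => fun i => H i (j : Fin m)))
    (A : Finset (Fin m)) (hA0 : 0 < A.card) (hAmN : A.card ≤ m - N)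
    (h : ((H.submatrix id (fun j : A => (j : Fin m)))ᵀ * (H * Hᵀ)⁻¹ *
          H.submatrix id (fun j : A => (j : Fin m))).IsHermitian) :
    ∀ i : A, h.eigenvalues i < 1 :=
  max_eigenvalue_lt_one_of_URP_general H hURP A hAmN h
end

section
/- Let f : R^m → R be differentiable and let s* ∈ R^m with ‖s*‖₀ ≤ r be an r-local maximum (or minimum) point of f, meaning there exists δ > 0 such that f(s*) ≥ f(s) (resp. f(s*) ≤ f(s)) for all s with ‖s‖₀ ≤ r and ‖s - s*‖₂ < δ. Then for every index i ∈ {1,…,m} such that |{i} ∪ supp(s*)| ≤ r, the partial derivative ∂f/∂s_i vanishes at s*. -/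
/-!
Along the coordinate line `t ↦ s* + t • eᵢ` only the `i`-th entry changes, so the line stays inside
the `r`-sparse vectors when `{i} ∪ supp s*` has at most `r` elements, and its Euclidean distance
to `s*` is `|t|`. Hence `s*` is an extremum of `f` on a set containing this line near `t = 0`,
and the derivative of `f` along `eᵢ` vanishes.
-/

open Set Filter Topology

/-- The set on which an `r`-local extremum in the paper's sense is extremal. -/
def sparseBall {ι : Type*} [Fintype ι] (r : ℕ) (x : ι → ℝ) (δ : ℝ) : Set (ι → ℝ) :=
  {s | {j | s j ≠ 0}.ncard ≤ r ∧ √(∑ j, (s j - x j) ^ 2) < δ}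

section Pi

variable {ι : Type*} [DecidableEq ι]

theorem support_add_smul_single_subset {R : Type*} [Semiring R] (x : ι → R) (i : ι) (t : R) :
    Function.support (x + t • Pi.single i 1) ⊆ insert i (Function.support x) := by
  intro j hj
  by_cases hji : j = i
  · exact Or.inl hji
  · right
    simpa [Pi.single_apply, hji] using hj

theorem sqrt_sum_sq_add_smul_single_sub [Fintype ι] (x : ι → ℝ) (i : ι) (t : ℝ) :
    √(∑ j, ((x + t • Pi.single i 1 : ι → ℝ) j - x j) ^ 2) = |t| := by
  have hsq : ∀ j, ((x + t • Pi.single i 1 : ι → ℝ) j - x j) ^ 2 = if j = i then t ^ 2 else 0 := by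
    intro j
    by_cases hji : j = i <;> simp [hji]
  simp only [hsq, Finset.sum_ite_eq', Finset.mem_univ, if_true, Real.sqrt_sq_eq_abs]

theorem eventually_add_smul_single_mem_sparseBall [Fintype ι] {r : ℕ} {x : ι → ℝ} {i : ι}
    (hi : (insert i {j | x j ≠ 0}).ncard ≤ r) {δ : ℝ} (hδ : 0 < δ) :
    ∀ᶠ t : ℝ in 𝓝 0, x + t • Pi.single i 1 ∈ sparseBall r x δ := by
  filter_upwards [Metric.ball_mem_nhds (0 : ℝ) hδ] with t ht
  refine ⟨(ncard_le_ncard (support_add_smul_single_subset x i t) (toFinite _)).trans hi, ?_⟩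
  rw [sqrt_sum_sq_add_smul_single_sub]
  simpa [Real.dist_eq] using ht

end Pi

theorem partial_deriv_zero_at_sparse_local_extremum_general {m : ℕ} (r : ℕ)
    (f : (Fin m → ℝ) → ℝ) (hf : Differentiable ℝ f)
    (sstar : Fin m → ℝ)
    (hext : ∃ δ > (0 : ℝ),
      (∀ s : Fin m → ℝ, {j | s j ≠ 0}.ncard ≤ r →
        Real.sqrt (∑ j, (s j - sstar j) ^ 2) < δ → f s ≤ f sstar) ∨
      (∀ s : Fin m → ℝ, {j | s j ≠ 0}.ncard ≤ r →
        Real.sqrt (∑ j, (s j - sstar j) ^ 2) < δ → f sstar ≤ f s)) :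
    ∀ i : Fin m, (insert i {j | sstar j ≠ 0}).ncard ≤ r →
      fderiv ℝ f sstar (Pi.single i 1) = 0 := by
  intro i hi
  obtain ⟨δ, hδ, hext⟩ := hext
  have hextr : IsExtrOn f (sparseBall r sstar δ) sstar :=
    hext.symm.imp (fun hmin s hs => hmin s hs.1 hs.2) (fun hmax s hs => hmax s hs.1 hs.2)
  exact hextr.hasLineDerivAt_eq_zero ((hf sstar).hasFDerivAt.hasLineDerivAt _)
    (eventually_add_smul_single_mem_sparseBall hi hδ)

theorem partial_deriv_zero_at_sparse_local_extremum {m : ℕ} (r : ℕ)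
    (f : (Fin m → ℝ) → ℝ) (hf : Differentiable ℝ f)
    (sstar : Fin m → ℝ) (hs : {j | sstar j ≠ 0}.ncard ≤ r)
    (hext : ∃ δ > (0 : ℝ),
      (∀ s : Fin m → ℝ, {j | s j ≠ 0}.ncard ≤ r →
        Real.sqrt (∑ j, (s j - sstar j) ^ 2) < δ → f s ≤ f sstar) ∨
      (∀ s : Fin m → ℝ, {j | s j ≠ 0}.ncard ≤ r →
        Real.sqrt (∑ j, (s j - sstar j) ^ 2) < δ → f sstar ≤ f s)) :
    ∀ i : Fin m, (insert i {j | sstar j ≠ 0}).ncard ≤ r →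
      fderiv ℝ f sstar (Pi.single i 1) = 0 :=
  partial_deriv_zero_at_sparse_local_extremum_general r f hf sstar hext
end

section
/- Let f : R^m → R be twice continuously differentiable and s* ∈ R^m with ‖s*‖₀ ≤ r. Suppose (1) for every i with |{i} ∪ supp(s*)| ≤ r the partial derivative ∂f/∂s_i vanishes at s*, and (2) there is δ > 0 such that the Hessian of f is negative semidefinite at every point s with ‖s‖₀ ≤ r and ‖s - s*‖₂ < δ. Then s* is an r-local maximum point of f, i.e., there exists δ' > 0 such that f(s*) ≥ f(s) for all r-sparse s with ‖s - s*‖₂ < δ'. -/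
/-!
Let `s` be `r`-sparse and close to `s*`. Every coordinate of `s*` that is nonzero is bounded away
from `0`, so `supp s* ⊆ supp s`; hence the whole segment from `s*` to `s` consists of `r`-sparse
points close to `s*`. Along it `g(t) = f(s* + t(s - s*))` is concave, and `g'(0) = 0` because
`s - s*` is supported in `supp s`, where every index `i` satisfies `|{i} ∪ supp s*| ≤ r`.
Thus `g(1) ≤ g(0)`.
-/

open Set Function

theorem exists_pos_le_abs_of_ne_zero {ι : Type*} [Finite ι] (x : ι → ℝ) :
    ∃ ε > (0 : ℝ), ∀ j, x j ≠ 0 → ε ≤ |x j| := by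
  cases isEmpty_or_nonempty ι
  · exact ⟨1, one_pos, fun j => isEmptyElim j⟩
  obtain ⟨j₀, hj₀⟩ := Finite.exists_min fun j => if x j = 0 then 1 else |x j|
  refine ⟨if x j₀ = 0 then 1 else |x j₀|, ?_, fun j hj => by simpa [hj] using hj₀ j⟩
  split_ifs with h
  exacts [one_pos, abs_pos.2 h]

theorem abs_le_sqrt_sum_sq {ι : Type*} [Fintype ι] (v : ι → ℝ) (j : ι) :
    |v j| ≤ √(∑ i, v i ^ 2) :=
  Real.abs_le_sqrt <| Finset.single_le_sum (f := fun i => v i ^ 2)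
    (fun _ _ => sq_nonneg _) (Finset.mem_univ j)

theorem support_subset_of_abs_sub_lt {ι : Type*} {a b : ι → ℝ} {ε : ℝ}
    (hε : ∀ j, a j ≠ 0 → ε ≤ |a j|) (hab : ∀ j, |b j - a j| < ε) :
    support a ⊆ support b := by
  intro j hj hbj
  have := hab j
  rw [hbj, zero_sub, abs_neg] at this
  exact (hε j hj).not_gt this

theorem support_add_smul_sub_subset {ι : Type*} {a b : ι → ℝ} (h : support a ⊆ support b)
    (t : ℝ) : support (a + t • (b - a)) ⊆ support b :=
  calc support (a + t • (b - a)) ⊆ support a ∪ support (b - a) :=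
        (support_add _ _).trans (union_subset_union_right _ (support_const_smul_subset _ _))
    _ ⊆ support b := union_subset h <|
        (support_sub _ _).trans (union_subset subset_rfl h)

theorem sqrt_sum_sq_add_smul_sub_le {ι : Type*} [Fintype ι] (a b : ι → ℝ) {t : ℝ}
    (ht : t ∈ Icc (0 : ℝ) 1) :
    √(∑ j, ((a + t • (b - a)) j - a j) ^ 2) ≤ √(∑ j, (b j - a j) ^ 2) := by
  refine Real.sqrt_le_sqrt <| Finset.sum_le_sum fun j _ => ?_
  have ht2 : t ^ 2 ≤ 1 := by nlinarith [ht.1, ht.2]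
  simpa [mul_pow] using mul_le_of_le_one_left (sq_nonneg (b j - a j)) ht2

theorem LinearMap.apply_eq_zero_of_forall_mem_support {ι R M : Type*} [Fintype ι]
    [DecidableEq ι] [Semiring R] [AddCommMonoid M] [Module R M] (L : (ι → R) →ₗ[R] M)
    {v : ι → R} (h : ∀ i ∈ support v, L (Pi.single i 1) = 0) : L v = 0 := by
  rw [← Finset.univ_sum_single v, map_sum]
  refine Finset.sum_eq_zero fun i _ => ?_
  by_cases hi : v i = 0
  · simp [hi]
  · rw [← mul_one (v i), ← smul_eq_mul, Pi.single_smul, map_smul, h i hi, smul_zero]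

theorem le_left_of_deriv_left_nonpos_of_second_deriv_nonpos {g g' g'' : ℝ → ℝ} {a b : ℝ}
    (hab : a ≤ b) (hg : ∀ t ∈ Icc a b, HasDerivAt g (g' t) t)
    (hg' : ∀ t ∈ Icc a b, HasDerivAt g' (g'' t) t) (ha : g' a ≤ 0)
    (hg'' : ∀ t ∈ Ioo a b, g'' t ≤ 0) : g b ≤ g a := by
  have antitone_of {φ φ' : ℝ → ℝ} (hφ : ∀ t ∈ Icc a b, HasDerivAt φ (φ' t) t)
      (hφ' : ∀ t ∈ Ioo a b, φ' t ≤ 0) : AntitoneOn φ (Icc a b) := by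
    refine antitoneOn_of_hasDerivWithinAt_nonpos (f' := φ') (convex_Icc a b)
      (fun t ht => (hφ t ht).continuousAt.continuousWithinAt) (fun t ht => ?_) ?_
    · exact (hφ t (interior_subset ht)).hasDerivWithinAt
    · simpa only [interior_Icc] using hφ'
  have hg'_anti : AntitoneOn g' (Icc a b) := antitone_of hg' hg''
  have hg_anti : AntitoneOn g (Icc a b) := antitone_of hg fun t ht =>
    (hg'_anti (left_mem_Icc.2 hab) (Ioo_subset_Icc_self ht) ht.1.le).trans ha
  exact hg_anti (left_mem_Icc.2 hab) (right_mem_Icc.2 hab) hab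

theorem le_of_fderiv_nonpos_of_iteratedFDeriv_two_nonpos {E : Type*} [NormedAddCommGroup E]
    [NormedSpace ℝ E] {f : E → ℝ} (hf : ContDiff ℝ 2 f) {a v : E} (h1 : fderiv ℝ f a v ≤ 0)
    (h2 : ∀ t ∈ Ioo (0 : ℝ) 1, iteratedFDeriv ℝ 2 f (a + t • v) ![v, v] ≤ 0) :
    f (a + v) ≤ f a := by
  have hpath (t : ℝ) : HasDerivAt (fun t : ℝ => a + t • v) v t := by
    simpa using ((hasDerivAt_id t).smul_const v).const_add a
  have hg (t : ℝ) : HasDerivAt (fun t => f (a + t • v)) (fderiv ℝ f (a + t • v) v) t :=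
    ((hf.differentiable (by norm_num)) _).hasFDerivAt.comp_hasDerivAt t (hpath t)
  have hg' (t : ℝ) : HasDerivAt (fun t => fderiv ℝ f (a + t • v) v)
      (fderiv ℝ (fderiv ℝ f) (a + t • v) v v) t :=
    (ContinuousLinearMap.apply ℝ ℝ v).hasFDerivAt.comp_hasDerivAt t <|
      (((hf.fderiv_right (by norm_num)).differentiable one_ne_zero) _).hasFDerivAt.comp_hasDerivAt
        t (hpath t)
  simpa using le_left_of_deriv_left_nonpos_of_second_deriv_nonpos zero_le_one
    (fun t _ => hg t) (fun t _ => hg' t) (by simpa using h1)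
    (fun t ht => by simpa [iteratedFDeriv_two_apply] using h2 t ht)

theorem sparse_local_max_of_second_order_general {m : ℕ} (r : ℕ)
    (f : (Fin m → ℝ) → ℝ) (hf : ContDiff ℝ 2 f)
    (sstar : Fin m → ℝ)
    (h1 : ∀ i : Fin m, (insert i {j | sstar j ≠ 0}).ncard ≤ r →
      fderiv ℝ f sstar (Pi.single i 1) = 0)
    (h2 : ∃ δ > (0 : ℝ), ∀ s : Fin m → ℝ, {j | s j ≠ 0}.ncard ≤ r →
      Real.sqrt (∑ j, (s j - sstar j) ^ 2) < δ →
      ∀ v : Fin m → ℝ, iteratedFDeriv ℝ 2 f s ![v, v] ≤ 0) :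
    ∃ δ' > (0 : ℝ), ∀ s : Fin m → ℝ, {j | s j ≠ 0}.ncard ≤ r →
      Real.sqrt (∑ j, (s j - sstar j) ^ 2) < δ' → f s ≤ f sstar := by
  obtain ⟨δ, hδ, hH⟩ := h2
  obtain ⟨ε, hε, hεle⟩ := exists_pos_le_abs_of_ne_zero sstar
  refine ⟨min δ ε, lt_min hδ hε, fun s hsr hclose => ?_⟩
  have hsupp : support sstar ⊆ support s := support_subset_of_abs_sub_lt hεle fun j =>
    (abs_le_sqrt_sum_sq (s - sstar) j).trans_lt (hclose.trans_le (min_le_right δ ε))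
  have hsparse {S : Set (Fin m)} (hS : S ⊆ support s) : S.ncard ≤ r :=
    (ncard_le_ncard hS (toFinite _)).trans hsr
  have hfderiv : fderiv ℝ f sstar (s - sstar) = 0 :=
    (fderiv ℝ f sstar).toLinearMap.apply_eq_zero_of_forall_mem_support fun i hi =>
      h1 i <| hsparse <| insert_subset
        ((support_sub s sstar).trans (union_subset subset_rfl hsupp) hi) hsupp
  simpa using le_of_fderiv_nonpos_of_iteratedFDeriv_two_nonpos hf hfderiv.le fun t ht =>
    hH _ (hsparse (support_add_smul_sub_subset hsupp t))
      ((sqrt_sum_sq_add_smul_sub_le sstar s (Ioo_subset_Icc_self ht)).trans_lt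
        (hclose.trans_le (min_le_left δ ε))) _

theorem sparse_local_max_of_second_order {m : ℕ} (r : ℕ)
    (f : (Fin m → ℝ) → ℝ) (hf : ContDiff ℝ 2 f)
    (sstar : Fin m → ℝ) (hs : {j | sstar j ≠ 0}.ncard ≤ r)
    (h1 : ∀ i : Fin m, (insert i {j | sstar j ≠ 0}).ncard ≤ r →
      fderiv ℝ f sstar (Pi.single i 1) = 0)
    (h2 : ∃ δ > (0 : ℝ), ∀ s : Fin m → ℝ, {j | s j ≠ 0}.ncard ≤ r →
      Real.sqrt (∑ j, (s j - sstar j) ^ 2) < δ →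
      ∀ v : Fin m → ℝ, iteratedFDeriv ℝ 2 f s ![v, v] ≤ 0) :
    ∃ δ' > (0 : ℝ), ∀ s : Fin m → ℝ, {j | s j ≠ 0}.ncard ≤ r →
      Real.sqrt (∑ j, (s j - sstar j) ^ 2) < δ' → f s ≤ f sstar :=
  sparse_local_max_of_second_order_general r f hf sstar h1 h2
end

section
/- Let H be an N×m real matrix with full row rank, y ∈ R^N, and define the ECME map on r-sparse vectors by s^{(p+1)} = T_r(s^{(p)} + H^T(HH^T)^{-1}(y - Hs^{(p)})), where T_r keeps the r largest-magnitude entries and zeroes the rest (T_r(z) is a minimizer of ‖z - s‖₂ over r-sparse s). Then the weighted squared error E(s) = (y - Hs)^T(HH^T)^{-1}(y - Hs) is monotonically non-increasing along the iteration: E(s^{(p+1)}) ≤ E(s^{(p)}) for all p. -/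
open Matrix Set

/-- Number of nonzero entries (ℓ₀ "norm"). -/
noncomputable def l0 {m : ℕ} (s : Fin m → ℝ) : ℕ := {j | s j ≠ 0}.ncard

/-- The weighted squared error E(s) = (y - Hs)ᵀ (HHᵀ)⁻¹ (y - Hs). -/
noncomputable def Efun {N m : ℕ} (H : Matrix (Fin N) (Fin m) ℝ) (y : Fin N → ℝ)
    (s : Fin m → ℝ) : ℝ :=
  (y - H *ᵥ s) ⬝ᵥ ((H * Hᵀ)⁻¹ *ᵥ (y - H *ᵥ s))

private lemma adj {a b : ℕ} (M : Matrix (Fin a) (Fin b) ℝ) (u : Fin a → ℝ)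
    (v : Fin b → ℝ) : (Mᵀ *ᵥ u) ⬝ᵥ v = u ⬝ᵥ (M *ᵥ v) := by
  rw [dotProduct_comm, Matrix.dotProduct_mulVec, Matrix.vecMul_transpose,
    dotProduct_comm]

theorem ecme_error_nonincreasing {N m : ℕ} (H : Matrix (Fin N) (Fin m) ℝ)
    (hNm : N ≤ m) (hrank : H.rank = N) (y : Fin N → ℝ) (r : ℕ)
    (sp sp1 : Fin m → ℝ) (hsp : l0 sp ≤ r) (hsp1 : l0 sp1 ≤ r)
    (hmin : ∀ s : Fin m → ℝ, l0 s ≤ r →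
      ((sp + Hᵀ *ᵥ ((H * Hᵀ)⁻¹ *ᵥ (y - H *ᵥ sp)) - sp1) ⬝ᵥ
       (sp + Hᵀ *ᵥ ((H * Hᵀ)⁻¹ *ᵥ (y - H *ᵥ sp)) - sp1)) ≤
      ((sp + Hᵀ *ᵥ ((H * Hᵀ)⁻¹ *ᵥ (y - H *ᵥ sp)) - s) ⬝ᵥ
       (sp + Hᵀ *ᵥ ((H * Hᵀ)⁻¹ *ᵥ (y - H *ᵥ sp)) - s))) :
    Efun H y sp1 ≤ Efun H y sp := by
  -- H*Hᵀ is invertible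
  have hrk : (H * Hᵀ).rank = N := by
    rw [Matrix.rank_self_mul_transpose, hrank]
  have hrange : LinearMap.range (H * Hᵀ).mulVecLin = ⊤ := by
    apply Submodule.eq_top_of_finrank_eq
    rw [show Module.finrank ℝ ↥(LinearMap.range (H * Hᵀ).mulVecLin) = (H * Hᵀ).rank from rfl,
      hrk, Module.finrank_fintype_fun_eq_card, Fintype.card_fin]
  have hsurj : Function.Surjective ((H * Hᵀ).mulVec) := by
    intro v
    obtain ⟨w, hw⟩ := (LinearMap.range_eq_top.mp hrange) v
    exact ⟨w, hw⟩
  have hdet : IsUnit (H * Hᵀ).det :=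
    (Matrix.isUnit_iff_isUnit_det _).mp (Matrix.mulVec_surjective_iff_isUnit.mp hsurj)
  obtain ⟨A, hAdef⟩ : ∃ A : Matrix (Fin N) (Fin N) ℝ, A = (H * Hᵀ)⁻¹ := ⟨_, rfl⟩
  have hBA : (H * Hᵀ) * A = 1 := by rw [hAdef]; exact Matrix.mul_nonsing_inv _ hdet
  have hAsym : Aᵀ = A := by
    rw [hAdef, Matrix.transpose_nonsing_inv, Matrix.transpose_mul,
      Matrix.transpose_transpose]
  obtain ⟨e, hedef⟩ : ∃ e : Fin N → ℝ, e = y - H *ᵥ sp := ⟨_, rfl⟩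
  obtain ⟨d, hddef⟩ : ∃ d : Fin m → ℝ, d = sp1 - sp := ⟨_, rfl⟩
  obtain ⟨g, hgdef⟩ : ∃ g : Fin m → ℝ, g = Hᵀ *ᵥ (A *ᵥ e) := ⟨_, rfl⟩
  -- symmetric moves for A
  have hAmove : ∀ (u v : Fin N → ℝ), u ⬝ᵥ (A *ᵥ v) = (A *ᵥ u) ⬝ᵥ v := by
    intro u v
    conv_rhs => rw [← hAsym, adj]
  -- the minimization hypothesis applied to sp
  have hQ : (g - d) ⬝ᵥ (g - d) ≤ g ⬝ᵥ g := by
    have h1 := hmin sp hsp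
    rw [← hAdef, ← hedef, ← hgdef] at h1
    have e1 : sp + g - sp1 = g - d := by rw [hddef]; abel
    have e2 : sp + g - sp = g := by abel
    rwa [e1, e2] at h1
  -- expand hQ : d⬝d ≤ 2 * ((A *ᵥ e) ⬝ᵥ (H *ᵥ d))
  have hdg : g ⬝ᵥ d = (A *ᵥ e) ⬝ᵥ (H *ᵥ d) := by rw [hgdef, adj]
  have hQ' : d ⬝ᵥ d ≤ 2 * ((A *ᵥ e) ⬝ᵥ (H *ᵥ d)) := by
    have expand : (g - d) ⬝ᵥ (g - d) = g ⬝ᵥ g - g ⬝ᵥ d - (g ⬝ᵥ d) + d ⬝ᵥ d := by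
      simp only [sub_dotProduct, dotProduct_sub]
      rw [dotProduct_comm d g]; ring
    rw [expand] at hQ
    rw [← hdg]; linarith
  -- the projection bound : (H *ᵥ d) ⬝ᵥ (A *ᵥ (H *ᵥ d)) ≤ d ⬝ᵥ d
  obtain ⟨Pd, hPdef⟩ : ∃ Pd : Fin m → ℝ, Pd = Hᵀ *ᵥ (A *ᵥ (H *ᵥ d)) := ⟨_, rfl⟩
  have hHPd : H *ᵥ Pd = H *ᵥ d := by
    rw [hPdef, Matrix.mulVec_mulVec, Matrix.mulVec_mulVec, hBA, Matrix.one_mulVec]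
  have hPP : Pd ⬝ᵥ Pd = (A *ᵥ (H *ᵥ d)) ⬝ᵥ (H *ᵥ d) := by
    have h : (Hᵀ *ᵥ (A *ᵥ (H *ᵥ d))) ⬝ᵥ Pd = (A *ᵥ (H *ᵥ d)) ⬝ᵥ (H *ᵥ Pd) :=
      adj H (A *ᵥ (H *ᵥ d)) Pd
    rw [hHPd, ← hPdef] at h
    exact h
  have hdP : d ⬝ᵥ Pd = (A *ᵥ (H *ᵥ d)) ⬝ᵥ (H *ᵥ d) := by
    rw [dotProduct_comm, hPdef, adj]
  have hproj : (H *ᵥ d) ⬝ᵥ (A *ᵥ (H *ᵥ d)) ≤ d ⬝ᵥ d := by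
    have hq : (0:ℝ) ≤ (d - Pd) ⬝ᵥ (d - Pd) := by
      rw [show (d - Pd) ⬝ᵥ (d - Pd) = ∑ j, (d j - Pd j) * (d j - Pd j) from rfl]
      exact Finset.sum_nonneg fun j _ => mul_self_nonneg _
    have expand : (d - Pd) ⬝ᵥ (d - Pd) = d ⬝ᵥ d - d ⬝ᵥ Pd - Pd ⬝ᵥ d + Pd ⬝ᵥ Pd := by
      simp only [sub_dotProduct, dotProduct_sub]; ring
    rw [expand, hPP, hdP, dotProduct_comm Pd d, hdP] at hq
    rw [dotProduct_comm]
    linarith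
  -- expand Efun
  have hyd : y - H *ᵥ sp1 = e - H *ᵥ d := by
    rw [hedef, hddef, Matrix.mulVec_sub]; abel
  have hE1 : Efun H y sp1 = e ⬝ᵥ (A *ᵥ e) - 2 * ((A *ᵥ e) ⬝ᵥ (H *ᵥ d))
      + (H *ᵥ d) ⬝ᵥ (A *ᵥ (H *ᵥ d)) := by
    have h0 : Efun H y sp1 = (e - H *ᵥ d) ⬝ᵥ (A *ᵥ (e - H *ᵥ d)) := by
      rw [Efun, hyd, ← hAdef]
    rw [h0, Matrix.mulVec_sub]
    simp only [sub_dotProduct, dotProduct_sub]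
    rw [hAmove e (H *ᵥ d), dotProduct_comm (H *ᵥ d) (A *ᵥ e)]
    ring
  have hE0 : Efun H y sp = e ⬝ᵥ (A *ᵥ e) := by rw [Efun, ← hAdef, ← hedef]
  rw [hE1, hE0]
  linarith
end

section
/- Let H be an N×m real matrix with full row rank, y ∈ R^N, and let s^{(p)}, s^{(p+1)} be consecutive iterates of the ECME thresholding map s^{(p+1)} = T_r(s^{(p)} + H^T(HH^T)^{-1}(y - Hs^{(p)})). Let A = supp(s^{(p)}) ∪ supp(s^{(p+1)}). Then E(s^{(p)}) - E(s^{(p+1)}) ≥ [1 - λ_max(H_A^T (HH^T)^{-1} H_A)] · ‖s^{(p+1)} - s^{(p)}‖₂², where E(s) = (y - Hs)^T(HH^T)^{-1}(y - Hs). -/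
open Matrix Set

/-- Restriction of H to the columns with indices satisfying P. -/
def colRestrict {N m : ℕ} (H : Matrix (Fin N) (Fin m) ℝ) (P : Fin m → Prop) :
    Matrix (Fin N) {j // P j} ℝ := fun i j => H i j

/-!
Write `e = y - H s⁽ᵖ⁾`, `d = s⁽ᵖ⁺¹⁾ - s⁽ᵖ⁾` and `B = (HHᵀ)⁻¹`. Since `B` is symmetric,
`E(s⁽ᵖ⁾) - E(s⁽ᵖ⁺¹⁾) = 2 ⟪Hd, Be⟫ - ⟪Hd, B Hd⟫`. The thresholded point `s⁽ᵖ⁺¹⁾` is at least as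
close to `s⁽ᵖ⁾ + HᵀBe` as the `r`-sparse vector `s⁽ᵖ⁾` is, which expands to
`‖d‖² ≤ 2 ⟪Hd, Be⟫`. Finally `d` is supported on `A`, so `⟪Hd, B Hd⟫` is the quadratic form of
`H_Aᵀ B H_A` at `d|_A`, bounded by its largest eigenvalue times `‖d‖²`.
-/

namespace Matrix

variable {n : Type*} [Fintype n]

open scoped ComplexOrder in
lemma IsHermitian.posSemidef_smul_one_sub [DecidableEq n] {𝕜 : Type*} [RCLike 𝕜]
    {A : Matrix n n 𝕜} (hA : A.IsHermitian) {c : ℝ} (hc : ∀ i, hA.eigenvalues i ≤ c) :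
    (c • 1 - A).PosSemidef := by
  rw [hA.spectral_theorem, RCLike.real_smul_eq_coe_smul (K := 𝕜),
    ← map_one (Unitary.conjStarAlgAut 𝕜 (Matrix n n 𝕜) hA.eigenvectorUnitary), ← map_smul,
    ← map_sub, Unitary.conjStarAlgAut_apply,
    Unitary.isUnit_coe.posSemidef_star_right_conjugate_iff, smul_one_eq_diagonal,
    diagonal_sub, posSemidef_diagonal_iff]
  intro i
  simpa using hc i

lemma IsHermitian.dotProduct_mulVec_le_iSup_eigenvalues_mul [DecidableEq n]
    {A : Matrix n n ℝ} (hA : A.IsHermitian) (x : n → ℝ) :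
    x ⬝ᵥ (A *ᵥ x) ≤ (⨆ i, hA.eigenvalues i) * (x ⬝ᵥ x) := by
  have hle i : hA.eigenvalues i ≤ ⨆ i, hA.eigenvalues i :=
    le_ciSup (finite_range _).bddAbove i
  have hpsd := (hA.posSemidef_smul_one_sub hle).dotProduct_mulVec_nonneg x
  simp only [star_trivial, sub_mulVec, dotProduct_sub, smul_mulVec, one_mulVec,
    dotProduct_smul, smul_eq_mul] at hpsd
  linarith

variable {R : Type*} [CommRing R]

lemma dotProduct_transpose_mul_mul_mulVec {κ : Type*} [Fintype κ] (A : Matrix κ n R)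
    (B : Matrix κ κ R) (x : n → R) :
    x ⬝ᵥ ((Aᵀ * B * A) *ᵥ x) = (A *ᵥ x) ⬝ᵥ (B *ᵥ (A *ᵥ x)) := by
  rw [← mulVec_mulVec, ← mulVec_mulVec, dotProduct_mulVec, vecMul_transpose]

lemma IsSymm.dotProduct_mulVec_sub_dotProduct_mulVec_sub {B : Matrix n n R} (hB : B.IsSymm)
    (e f : n → R) :
    e ⬝ᵥ (B *ᵥ e) - (e - f) ⬝ᵥ (B *ᵥ (e - f)) = 2 * (f ⬝ᵥ (B *ᵥ e)) - f ⬝ᵥ (B *ᵥ f) := by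
  have hsymm : e ⬝ᵥ (B *ᵥ f) = f ⬝ᵥ (B *ᵥ e) := by
    rw [dotProduct_mulVec, ← mulVec_transpose, hB.eq, dotProduct_comm]
  simp only [mulVec_sub, dotProduct_sub, sub_dotProduct, hsymm]
  ring

end Matrix

lemma dotProduct_self_le_two_mul_dotProduct_of_dotProduct_sub_le {n R : Type*} [Fintype n]
    [CommRing R] [PartialOrder R] [IsOrderedRing R] {g d : n → R}
    (h : (g - d) ⬝ᵥ (g - d) ≤ g ⬝ᵥ g) : d ⬝ᵥ d ≤ 2 * (d ⬝ᵥ g) := by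
  simp only [dotProduct_sub, sub_dotProduct, dotProduct_comm g d] at h
  linear_combination h

lemma Fintype.sum_subtype_eq_sum_of_support {ι M : Type*} [Fintype ι] [AddCommMonoid M]
    (P : ι → Prop) [DecidablePred P] {g : ι → M} (hg : ∀ j, ¬ P j → g j = 0) :
    ∑ j : {j // P j}, g j = ∑ j, g j := by
  rw [← Fintype.sum_subtype_add_sum_subtype P g,
    Finset.sum_eq_zero fun (j : {j // ¬ P j}) _ => hg j j.2, add_zero]

section Support

variable {m : ℕ} {P : Fin m → Prop} [DecidablePred P] {d : Fin m → ℝ}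

lemma colRestrict_mulVec_of_support {N : ℕ} (H : Matrix (Fin N) (Fin m) ℝ)
    (hd : ∀ j, ¬ P j → d j = 0) : colRestrict H P *ᵥ (fun j => d j) = H *ᵥ d := by
  ext i
  exact Fintype.sum_subtype_eq_sum_of_support P (g := fun j => H i j * d j)
    fun j hj => by simp [hd j hj]

lemma dotProduct_restrict_self_of_support (hd : ∀ j, ¬ P j → d j = 0) :
    (fun j : {j // P j} => d j) ⬝ᵥ (fun j => d j) = d ⬝ᵥ d :=
  Fintype.sum_subtype_eq_sum_of_support P (g := fun j => d j * d j)
    fun j hj => by simp [hd j hj]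

end Support

theorem ecme_error_decrease_bound_general {N m : ℕ} (H : Matrix (Fin N) (Fin m) ℝ)
    (y : Fin N → ℝ) (r : ℕ)
    (sp sp1 : Fin m → ℝ) (hsp : l0 sp ≤ r)
    (hmin : ∀ s : Fin m → ℝ, l0 s ≤ r →
      ((sp + Hᵀ *ᵥ ((H * Hᵀ)⁻¹ *ᵥ (y - H *ᵥ sp)) - sp1) ⬝ᵥ
       (sp + Hᵀ *ᵥ ((H * Hᵀ)⁻¹ *ᵥ (y - H *ᵥ sp)) - sp1)) ≤
      ((sp + Hᵀ *ᵥ ((H * Hᵀ)⁻¹ *ᵥ (y - H *ᵥ sp)) - s) ⬝ᵥ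
       (sp + Hᵀ *ᵥ ((H * Hᵀ)⁻¹ *ᵥ (y - H *ᵥ sp)) - s)))
    (h : ((colRestrict H (fun j => sp j ≠ 0 ∨ sp1 j ≠ 0))ᵀ * (H * Hᵀ)⁻¹ *
          colRestrict H (fun j => sp j ≠ 0 ∨ sp1 j ≠ 0)).IsHermitian) :
    Efun H y sp - Efun H y sp1 ≥
      (1 - ⨆ i : {j // sp j ≠ 0 ∨ sp1 j ≠ 0}, h.eigenvalues i) *
        ((sp1 - sp) ⬝ᵥ (sp1 - sp)) := by
  set B := (H * Hᵀ)⁻¹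
  set e := y - H *ᵥ sp
  set d := sp1 - sp
  have hB : B.IsSymm := by
    rw [IsSymm, transpose_nonsing_inv, transpose_mul, transpose_transpose]
  have hd : ∀ j, ¬ (sp j ≠ 0 ∨ sp1 j ≠ 0) → d j = 0 := by
    intro j hj
    simp_all [d]
  have hstep : d ⬝ᵥ d ≤ 2 * ((H *ᵥ d) ⬝ᵥ (B *ᵥ e)) := by
    have hclose := hmin sp hsp
    rw [show sp + Hᵀ *ᵥ (B *ᵥ e) - sp1 = Hᵀ *ᵥ (B *ᵥ e) - d by simp only [d]; abel,
      add_sub_cancel_left] at hclose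
    rw [dotProduct_comm, ← vecMul_transpose, ← dotProduct_mulVec]
    exact dotProduct_self_le_two_mul_dotProduct_of_dotProduct_sub_le hclose
  have hdecrease : Efun H y sp - Efun H y sp1 =
      2 * ((H *ᵥ d) ⬝ᵥ (B *ᵥ e)) - (H *ᵥ d) ⬝ᵥ (B *ᵥ (H *ᵥ d)) := by
    rw [← hB.dotProduct_mulVec_sub_dotProduct_mulVec_sub, Efun, Efun,
      show y - H *ᵥ sp1 = e - H *ᵥ d by simp only [e, d, mulVec_sub]; abel]
  have hrayleigh := h.dotProduct_mulVec_le_iSup_eigenvalues_mul (fun j => d j)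
  rw [dotProduct_transpose_mul_mul_mulVec, colRestrict_mulVec_of_support H hd,
    dotProduct_restrict_self_of_support hd] at hrayleigh
  rw [ge_iff_le, hdecrease]
  linarith

open scoped Classical in
theorem ecme_error_decrease_bound {N m : ℕ} (H : Matrix (Fin N) (Fin m) ℝ)
    (hNm : N ≤ m) (hrank : H.rank = N) (y : Fin N → ℝ) (r : ℕ)
    (sp sp1 : Fin m → ℝ) (hsp : l0 sp ≤ r) (hsp1 : l0 sp1 ≤ r)
    (hmin : ∀ s : Fin m → ℝ, l0 s ≤ r →
      ((sp + Hᵀ *ᵥ ((H * Hᵀ)⁻¹ *ᵥ (y - H *ᵥ sp)) - sp1) ⬝ᵥ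
       (sp + Hᵀ *ᵥ ((H * Hᵀ)⁻¹ *ᵥ (y - H *ᵥ sp)) - sp1)) ≤
      ((sp + Hᵀ *ᵥ ((H * Hᵀ)⁻¹ *ᵥ (y - H *ᵥ sp)) - s) ⬝ᵥ
       (sp + Hᵀ *ᵥ ((H * Hᵀ)⁻¹ *ᵥ (y - H *ᵥ sp)) - s)))
    (h : ((colRestrict H (fun j => sp j ≠ 0 ∨ sp1 j ≠ 0))ᵀ * (H * Hᵀ)⁻¹ *
          colRestrict H (fun j => sp j ≠ 0 ∨ sp1 j ≠ 0)).IsHermitian) :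
    Efun H y sp - Efun H y sp1 ≥
      (1 - ⨆ i : {j // sp j ≠ 0 ∨ sp1 j ≠ 0}, h.eigenvalues i) *
        ((sp1 - sp) ⬝ᵥ (sp1 - sp)) :=
  ecme_error_decrease_bound_general H y r sp sp1 hsp hmin h
end

section
/- Let H be an N×m real matrix with full row rank, let s⋄ ∈ R^m be r-sparse, y = Hs⋄, and suppose ρ_{2r,min}(H) > 1/2. Let s^{(p)} be the iterates of the ECME map s^{(p+1)} = T_r(s^{(p)} + H^T(HH^T)^{-1}(y - Hs^{(p)})) from any r-sparse initialization s^{(0)}. Then ‖s⋄ - s^{(p+1)}‖₂² ≤ ζ(H)·‖s⋄ - s^{(p)}‖₂² where ζ(H) = (1 - ρ_{2r,min}(H))/ρ_{2r,min}(H) ∈ [0,1), and hence s^{(p)} converges to s⋄, recovering the true sparse signal exactly. -/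
open Matrix Set

/-- The r-sparse subspace quotient ρ_r(s, H). -/
noncomputable def ssq {N m : ℕ} (H : Matrix (Fin N) (Fin m) ℝ) (s : Fin m → ℝ) : ℝ :=
  (s ⬝ᵥ ((Hᵀ * (H * Hᵀ)⁻¹ * H) *ᵥ s)) / (s ⬝ᵥ s)

/-- The minimum r-sparse subspace quotient ρ_{r,min}(H). -/
noncomputable def minSSQ {N m : ℕ} (H : Matrix (Fin N) (Fin m) ℝ) (r : ℕ) : ℝ :=
  sInf {x | ∃ s : Fin m → ℝ, s ≠ 0 ∧ l0 s ≤ r ∧ x = ssq H s}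

/-- Cauchy–Schwarz for the dot product. -/
lemma cs_dot {m : ℕ} (a b : Fin m → ℝ) : (a ⬝ᵥ b) ^ 2 ≤ (a ⬝ᵥ a) * (b ⬝ᵥ b) := by
  have := Finset.sum_mul_sq_le_sq_mul_sq Finset.univ a b
  simpa [dotProduct, sq] using this

lemma dot_self_nonneg {m : ℕ} (a : Fin m → ℝ) : 0 ≤ a ⬝ᵥ a :=
  Finset.sum_nonneg fun _ _ => mul_self_nonneg _

lemma dot_sub_sub {m : ℕ} (a b c d : Fin m → ℝ) :
    (a - b) ⬝ᵥ (c - d) = a ⬝ᵥ c - a ⬝ᵥ d - (b ⬝ᵥ c - b ⬝ᵥ d) := by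
  simp only [sub_dotProduct, dotProduct_sub]
  ring

/-- ℓ₀ of a difference. -/
lemma l0_sub_le {m : ℕ} (a b : Fin m → ℝ) : l0 (a - b) ≤ l0 a + l0 b := by
  have hsub : {j | (a - b) j ≠ 0} ⊆ {j | a j ≠ 0} ∪ {j | b j ≠ 0} := by
    intro j hj
    by_contra hc
    simp only [Set.mem_union, Set.mem_setOf_eq, not_or, not_not] at hc
    apply hj
    simp [hc.1, hc.2]
  calc l0 (a - b) ≤ ({j | a j ≠ 0} ∪ {j | b j ≠ 0}).ncard :=
        Set.ncard_le_ncard hsub (Set.toFinite _)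
    _ ≤ l0 a + l0 b := Set.ncard_union_le _ _

/-- The scalar step of the contraction argument. -/
lemma scalar_step {ρ A B : ℝ} (hρ : 1 / 2 < ρ) (hρ1 : ρ ≤ 1) (hA0 : 0 ≤ A) (hB0 : 0 ≤ B)
    (h : A ^ 2 ≤ 4 * ((1 - ρ) * A) * ((1 - ρ) * B)) : A ≤ (1 - ρ) / ρ * B := by
  have hρpos : 0 < ρ := by linarith
  rw [div_mul_eq_mul_div, le_div_iff₀ hρpos]
  rcases hA0.eq_or_lt with hAz | hAz
  · rw [← hAz, zero_mul]
    exact mul_nonneg (by linarith) hB0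
  · have h3 : A ≤ 4 * (1 - ρ) ^ 2 * B := by nlinarith [h, hAz]
    nlinarith [mul_le_mul_of_nonneg_right h3 hρpos.le,
      mul_nonneg (mul_nonneg (by linarith : (0:ℝ) ≤ 1 - ρ) hB0) (sq_nonneg (2 * ρ - 1))]

theorem ecme_exact_recovery {N m : ℕ} (H : Matrix (Fin N) (Fin m) ℝ)
    (hNm : N ≤ m) (hrank : H.rank = N) (r : ℕ)
    (sd : Fin m → ℝ) (hsd : l0 sd ≤ r)
    (y : Fin N → ℝ) (hy : y = H *ᵥ sd)
    (hssq : 1 / 2 < minSSQ H (2 * r))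
    (s : ℕ → Fin m → ℝ) (h0 : l0 (s 0) ≤ r)
    (hstep : ∀ p : ℕ, l0 (s (p + 1)) ≤ r ∧
      ∀ t : Fin m → ℝ, l0 t ≤ r →
        ((s p + Hᵀ *ᵥ ((H * Hᵀ)⁻¹ *ᵥ (y - H *ᵥ s p)) - s (p + 1)) ⬝ᵥ
         (s p + Hᵀ *ᵥ ((H * Hᵀ)⁻¹ *ᵥ (y - H *ᵥ s p)) - s (p + 1))) ≤
        ((s p + Hᵀ *ᵥ ((H * Hᵀ)⁻¹ *ᵥ (y - H *ᵥ s p)) - t) ⬝ᵥ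
         (s p + Hᵀ *ᵥ ((H * Hᵀ)⁻¹ *ᵥ (y - H *ᵥ s p)) - t))) :
    (0 ≤ (1 - minSSQ H (2 * r)) / minSSQ H (2 * r) ∧
      (1 - minSSQ H (2 * r)) / minSSQ H (2 * r) < 1) ∧
    (∀ p : ℕ, (sd - s (p + 1)) ⬝ᵥ (sd - s (p + 1)) ≤
      ((1 - minSSQ H (2 * r)) / minSSQ H (2 * r)) * ((sd - s p) ⬝ᵥ (sd - s p))) ∧
    Filter.Tendsto s Filter.atTop (nhds sd) := by
  classical
  obtain ⟨ρ, hρdef⟩ : ∃ x, x = minSSQ H (2 * r) := ⟨_, rfl⟩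
  rw [← hρdef] at hssq ⊢
  obtain ⟨P, hPdef⟩ : ∃ Q : Matrix (Fin m) (Fin m) ℝ, Q = Hᵀ * (H * Hᵀ)⁻¹ * H := ⟨_, rfl⟩
  -- invertibility of H * Hᵀ
  have hrk : (H * Hᵀ).rank = N := by rw [Matrix.rank_self_mul_transpose, hrank]
  have hunit : IsUnit (H * Hᵀ) := by
    rw [← Matrix.mulVec_surjective_iff_isUnit]
    have htop : LinearMap.range (H * Hᵀ).mulVecLin = ⊤ := by
      apply Submodule.eq_top_of_finrank_eq
      rw [show Module.finrank ℝ (LinearMap.range (H * Hᵀ).mulVecLin) = (H * Hᵀ).rank from rfl,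
        hrk]
      simp
    intro v
    obtain ⟨w, hw⟩ := LinearMap.range_eq_top.mp htop v
    exact ⟨w, hw⟩
  have hdet : IsUnit (H * Hᵀ).det := (Matrix.isUnit_iff_isUnit_det _).mp hunit
  -- P is symmetric idempotent
  have hPsym : Pᵀ = P := by
    rw [hPdef]
    rw [Matrix.transpose_mul, Matrix.transpose_mul, Matrix.transpose_transpose,
      Matrix.transpose_nonsing_inv, Matrix.transpose_mul, Matrix.transpose_transpose,
      Matrix.mul_assoc]
  have hPP : P * P = P := by
    have h1 : (H * Hᵀ)⁻¹ * (H * Hᵀ) = 1 := Matrix.nonsing_inv_mul _ hdet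
    calc P * P = Hᵀ * (((H * Hᵀ)⁻¹ * (H * Hᵀ)) * ((H * Hᵀ)⁻¹ * H)) := by
          rw [hPdef]; simp only [Matrix.mul_assoc]
      _ = P := by rw [h1, Matrix.one_mul, hPdef, Matrix.mul_assoc]
  have hsymdot : ∀ v w : Fin m → ℝ, v ⬝ᵥ (P *ᵥ w) = (P *ᵥ v) ⬝ᵥ (P *ᵥ w) := by
    intro v w
    conv_lhs => rw [← hPP, ← Matrix.mulVec_mulVec, Matrix.dotProduct_mulVec,
      ← Matrix.mulVec_transpose, hPsym]
  have hPnn : ∀ v : Fin m → ℝ, 0 ≤ v ⬝ᵥ (P *ᵥ v) := by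
    intro v; rw [hsymdot]; exact dot_self_nonneg _
  -- contraction: v ⬝ P v ≤ v ⬝ v
  have hcontr : ∀ v : Fin m → ℝ, v ⬝ᵥ (P *ᵥ v) ≤ v ⬝ᵥ v := by
    intro v
    have hcs := cs_dot v (P *ᵥ v)
    have h1 : v ⬝ᵥ (P *ᵥ v) = (P *ᵥ v) ⬝ᵥ (P *ᵥ v) := hsymdot v v
    rcases (dot_self_nonneg (P *ᵥ v)).eq_or_lt with h | h
    · rw [h1, ← h]; exact dot_self_nonneg v
    · nlinarith [dot_self_nonneg v]
  -- the defining set of minSSQ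
  have hSρ : ρ = sInf {x | ∃ v : Fin m → ℝ, v ≠ 0 ∧ l0 v ≤ 2 * r ∧ x = ssq H v} := hρdef
  have hssqP : ∀ v : Fin m → ℝ, ssq H v = (v ⬝ᵥ (P *ᵥ v)) / (v ⬝ᵥ v) := by
    intro v; rw [ssq, hPdef]
  have hbdd : BddBelow {x | ∃ v : Fin m → ℝ, v ≠ 0 ∧ l0 v ≤ 2 * r ∧ x = ssq H v} := by
    refine ⟨0, fun x hx => ?_⟩
    obtain ⟨v, _, _, rfl⟩ := hx
    rw [hssqP]
    exact div_nonneg (hPnn v) (dot_self_nonneg v)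
  have hdotpos : ∀ v : Fin m → ℝ, v ≠ 0 → 0 < v ⬝ᵥ v := by
    intro v hv
    rcases (dot_self_nonneg v).eq_or_lt with h | h
    · exact absurd (dotProduct_self_eq_zero.mp h.symm) hv
    · exact h
  -- lower bound: ρ * (v⬝v) ≤ v ⬝ P v for 2r-sparse v
  have hlb : ∀ v : Fin m → ℝ, l0 v ≤ 2 * r → ρ * (v ⬝ᵥ v) ≤ v ⬝ᵥ (P *ᵥ v) := by
    intro v hv
    by_cases hv0 : v = 0
    · simp [hv0]
    · have hle : ρ ≤ ssq H v := by
        rw [hρdef]; exact csInf_le hbdd ⟨v, hv0, hv, rfl⟩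
      have hpos := hdotpos v hv0
      rw [hssqP] at hle
      calc ρ * (v ⬝ᵥ v) ≤ ((v ⬝ᵥ (P *ᵥ v)) / (v ⬝ᵥ v)) * (v ⬝ᵥ v) :=
            mul_le_mul_of_nonneg_right hle hpos.le
        _ = v ⬝ᵥ (P *ᵥ v) := div_mul_cancel₀ _ hpos.ne'
  -- ρ > 0
  have hρpos : 0 < ρ := lt_trans (by norm_num) hssq
  -- m > 0 and r > 0
  have hmr : 0 < m ∧ 0 < r := by
    by_contra hc
    push_neg at hc
    have hSempty : {x | ∃ v : Fin m → ℝ, v ≠ 0 ∧ l0 v ≤ 2 * r ∧ x = ssq H v} = ∅ := by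
      rw [Set.eq_empty_iff_forall_notMem]
      rintro x ⟨v, hv0, hvl, -⟩
      rcases Nat.eq_zero_or_pos m with hm | hm
      · exact hv0 (funext fun j => absurd j.2 (by omega))
      · have hr : r = 0 := by have := hc hm; omega
        have hempty : {j | v j ≠ 0} = ∅ := by
          have h2 := hvl
          rw [hr, Nat.mul_zero, Nat.le_zero, l0] at h2
          exact (Set.ncard_eq_zero (Set.toFinite _)).mp h2
        apply hv0
        funext j
        by_contra hj
        have : j ∈ {j | v j ≠ 0} := hj
        rw [hempty] at this
        exact this
    rw [hSρ, hSempty, Real.sInf_empty] at hssq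
    norm_num at hssq
  -- ρ ≤ 1
  have hρle1 : ρ ≤ 1 := by
    have hj0 : (0 : ℕ) < m := hmr.1
    obtain ⟨e0, he0⟩ : ∃ x : Fin m → ℝ, x = Pi.single (⟨0, hj0⟩ : Fin m) 1 := ⟨_, rfl⟩
    have he00 : e0 ≠ 0 := by
      intro h
      have := congrFun h ⟨0, hj0⟩
      rw [he0] at this
      simp at this
    have hl0e0 : l0 e0 ≤ 2 * r := by
      have hsub : {j | e0 j ≠ 0} ⊆ {(⟨0, hj0⟩ : Fin m)} := by
        intro j hj
        by_contra hne
        refine hj ?_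
        rw [he0]
        exact Pi.single_eq_of_ne (by simpa using hne) 1
      calc l0 e0 ≤ ({(⟨0, hj0⟩ : Fin m)} : Set (Fin m)).ncard :=
            Set.ncard_le_ncard hsub (Set.toFinite _)
        _ = 1 := Set.ncard_singleton _
        _ ≤ 2 * r := by have := hmr.2; omega
    have hle : ρ ≤ ssq H e0 := by
      rw [hρdef]; exact csInf_le hbdd ⟨e0, he00, hl0e0, rfl⟩
    have hpos := hdotpos e0 he00
    have : ssq H e0 ≤ 1 := by
      rw [hssqP, div_le_one hpos]
      exact hcontr e0
    linarith
  have hζ0 : 0 ≤ (1 - ρ) / ρ := div_nonneg (by linarith) hρpos.le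
  have hζ1 : (1 - ρ) / ρ < 1 := by
    rw [div_lt_one hρpos]; linarith
  -- sparsity of iterates
  have hsp : ∀ p, l0 (s p) ≤ r := by
    intro p
    cases p with
    | zero => exact h0
    | succ q => exact (hstep q).1
  -- main contraction inequality
  have key : ∀ p : ℕ, (sd - s (p + 1)) ⬝ᵥ (sd - s (p + 1)) ≤
      ((1 - ρ) / ρ) * ((sd - s p) ⬝ᵥ (sd - s p)) := by
    intro p
    obtain ⟨e, he⟩ : ∃ x : Fin m → ℝ, x = sd - s p := ⟨_, rfl⟩
    obtain ⟨e', he'⟩ : ∃ x : Fin m → ℝ, x = sd - s (p + 1) := ⟨_, rfl⟩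
    rw [← he, ← he']
    have he2r : l0 e ≤ 2 * r := by
      rw [he]
      calc l0 (sd - s p) ≤ l0 sd + l0 (s p) := l0_sub_le _ _
        _ ≤ 2 * r := by have := hsp p; omega
    have he'2r : l0 e' ≤ 2 * r := by
      rw [he']
      calc l0 (sd - s (p + 1)) ≤ l0 sd + l0 (s (p + 1)) := l0_sub_le _ _
        _ ≤ 2 * r := by have := hsp (p + 1); omega
    -- rewrite the correction term
    have hHe : Hᵀ *ᵥ ((H * Hᵀ)⁻¹ *ᵥ (y - H *ᵥ s p)) = P *ᵥ e := by
      rw [he, hy, ← Matrix.mulVec_sub, Matrix.mulVec_mulVec, Matrix.mulVec_mulVec, hPdef,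
        Matrix.mul_assoc]
    have h1 := (hstep p).2 sd hsd
    rw [hHe] at h1
    obtain ⟨u, hu⟩ : ∃ x : Fin m → ℝ, x = e - P *ᵥ e := ⟨_, rfl⟩
    obtain ⟨u', hu'⟩ : ∃ x : Fin m → ℝ, x = e' - P *ᵥ e' := ⟨_, rfl⟩
    have hv1 : s p + P *ᵥ e - s (p + 1) = e' - u := by rw [hu, he', he]; abel
    have hv2 : s p + P *ᵥ e - sd = -u := by rw [hu, he]; abel
    rw [hv1, hv2] at h1
    have hneg : (-u) ⬝ᵥ (-u) = u ⬝ᵥ u := by simp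
    rw [hneg] at h1
    -- expand (e' - u)⬝(e' - u)
    have hexp : (e' - u) ⬝ᵥ (e' - u) = e' ⬝ᵥ e' - 2 * (e' ⬝ᵥ u) + u ⬝ᵥ u := by
      rw [dot_sub_sub, dotProduct_comm u e']
      ring
    have h2 : e' ⬝ᵥ e' ≤ 2 * (e' ⬝ᵥ u) := by
      rw [hexp] at h1; linarith
    -- symmetry facts
    have hx1 : (P *ᵥ e') ⬝ᵥ (P *ᵥ e) = e' ⬝ᵥ (P *ᵥ e) := (hsymdot e' e).symm
    have hx2 : (P *ᵥ e') ⬝ᵥ e = e' ⬝ᵥ (P *ᵥ e) := by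
      rw [dotProduct_comm, hsymdot e e', dotProduct_comm (P *ᵥ e) (P *ᵥ e'), hx1]
    have hEu : e' ⬝ᵥ u = e' ⬝ᵥ e - e' ⬝ᵥ (P *ᵥ e) := by
      rw [hu, dotProduct_sub]
    have hU'u : u' ⬝ᵥ u =
        e' ⬝ᵥ e - e' ⬝ᵥ (P *ᵥ e) - ((P *ᵥ e') ⬝ᵥ e - (P *ᵥ e') ⬝ᵥ (P *ᵥ e)) := by
      rw [hu, hu', dot_sub_sub]
    have hswap : e' ⬝ᵥ u = u' ⬝ᵥ u := by
      rw [hEu, hU'u, hx1, hx2]; ring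
    -- quadratic form bounds
    have hu'u' : u' ⬝ᵥ u' ≤ (1 - ρ) * (e' ⬝ᵥ e') := by
      have hq : u' ⬝ᵥ u' = e' ⬝ᵥ e' - e' ⬝ᵥ (P *ᵥ e') := by
        rw [hu', dot_sub_sub, dotProduct_comm (P *ᵥ e') e', (hsymdot e' e').symm]
        ring
      have := hlb e' he'2r
      rw [hq]; linarith
    have huu : u ⬝ᵥ u ≤ (1 - ρ) * (e ⬝ᵥ e) := by
      have hq : u ⬝ᵥ u = e ⬝ᵥ e - e ⬝ᵥ (P *ᵥ e) := by
        rw [hu, dot_sub_sub, dotProduct_comm (P *ᵥ e) e, (hsymdot e e).symm]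
        ring
      have := hlb e he2r
      rw [hq]; linarith
    have hcs : (u' ⬝ᵥ u) ^ 2 ≤ ((1 - ρ) * (e' ⬝ᵥ e')) * ((1 - ρ) * (e ⬝ᵥ e)) := by
      calc (u' ⬝ᵥ u) ^ 2 ≤ (u' ⬝ᵥ u') * (u ⬝ᵥ u) := cs_dot u' u
        _ ≤ ((1 - ρ) * (e' ⬝ᵥ e')) * ((1 - ρ) * (e ⬝ᵥ e)) := by
            apply mul_le_mul hu'u' huu (dot_self_nonneg u)
            exact mul_nonneg (by linarith) (dot_self_nonneg e')
    rw [hswap] at h2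
    have hA2 : (e' ⬝ᵥ e') ^ 2 ≤ 4 * ((1 - ρ) * (e' ⬝ᵥ e')) * ((1 - ρ) * (e ⬝ᵥ e)) := by
      nlinarith [hcs, h2, dot_self_nonneg e']
    exact scalar_step hssq hρle1 (dot_self_nonneg e') (dot_self_nonneg e) hA2
  refine ⟨⟨hζ0, hζ1⟩, key, ?_⟩
  -- convergence
  have hgeom : ∀ p, (sd - s p) ⬝ᵥ (sd - s p) ≤
      ((1 - ρ) / ρ) ^ p * ((sd - s 0) ⬝ᵥ (sd - s 0)) := by
    intro p
    induction p with
    | zero => simp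
    | succ q ih =>
      calc (sd - s (q + 1)) ⬝ᵥ (sd - s (q + 1))
          ≤ ((1 - ρ) / ρ) * ((sd - s q) ⬝ᵥ (sd - s q)) := key q
        _ ≤ ((1 - ρ) / ρ) * (((1 - ρ) / ρ) ^ q * ((sd - s 0) ⬝ᵥ (sd - s 0))) :=
            mul_le_mul_of_nonneg_left ih hζ0
        _ = ((1 - ρ) / ρ) ^ (q + 1) * ((sd - s 0) ⬝ᵥ (sd - s 0)) := by ring
  have hto : Filter.Tendsto (fun p => (sd - s p) ⬝ᵥ (sd - s p)) Filter.atTop (nhds 0) := by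
    have hb : Filter.Tendsto
        (fun p : ℕ => ((1 - ρ) / ρ) ^ p * ((sd - s 0) ⬝ᵥ (sd - s 0))) Filter.atTop (nhds 0) := by
      have := (tendsto_pow_atTop_nhds_zero_of_lt_one hζ0 hζ1).mul_const ((sd - s 0) ⬝ᵥ (sd - s 0))
      simpa using this
    exact tendsto_of_tendsto_of_tendsto_of_le_of_le tendsto_const_nhds hb
      (fun p => dot_self_nonneg _) hgeom
  rw [tendsto_pi_nhds]
  intro j
  have hj2 : ∀ p, (sd j - s p j) ^ 2 ≤ (sd - s p) ⬝ᵥ (sd - s p) := by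
    intro p
    have h : (sd j - s p j) ^ 2 = (sd - s p) j * (sd - s p) j := by
      simp [Pi.sub_apply, sq]
    rw [h]
    exact Finset.single_le_sum (f := fun i => (sd - s p) i * (sd - s p) i)
      (fun i _ => mul_self_nonneg _) (Finset.mem_univ j)
  have hsq : Filter.Tendsto (fun p => (sd j - s p j) ^ 2) Filter.atTop (nhds 0) :=
    tendsto_of_tendsto_of_tendsto_of_le_of_le tendsto_const_nhds hto
      (fun p => sq_nonneg _) hj2
  have habs : Filter.Tendsto (fun p => |sd j - s p j|) Filter.atTop (nhds 0) := by
    have := hsq.sqrt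
    simpa [Real.sqrt_sq_eq_abs] using this
  have hdiff : Filter.Tendsto (fun p => sd j - s p j) Filter.atTop (nhds 0) :=
    (tendsto_zero_iff_abs_tendsto_zero _).mpr habs
  have := Filter.Tendsto.sub (tendsto_const_nhds (x := sd j)) hdiff
  simpa using this
end
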